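/- Let α, β, γ ∈ 𝕋 be rationally independent, let Λ ≤ 𝕋³ be the subgroup generated by (α,1,α), (1,α,β), (1,1,γ), and let K₁ := 𝕋 × {1} × 𝕋 and K₂ := {1} × 𝕋 × 𝕋. Then there exists no topological group automorphism δ of 𝕋³ (i.e. a group automorphism that is a homeomorphism) satisfying both δ(Λ) = Λ and δ(ΛK₁) = ΛK₂. -/

import Mathlib

/-- In a commutative group `K`, the subgroup `AB = {ab : a ∈ A, b ∈ B}`. -/
def prodSubgroup {K : Type*} [CommGroup K] (A B : Subgroup K) : Subgroup K where
  carrier := {x | ∃ a ∈ A, ∃ b ∈ B, x = a * b}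
  one_mem' := ⟨1, A.one_mem, 1, B.one_mem, (one_mul 1).symm⟩
  mul_mem' := by
    rintro x y ⟨a, ha, b, hb, rfl⟩ ⟨c, hc, d, hd, rfl⟩
    exact ⟨a * c, A.mul_mem ha hc, b * d, B.mul_mem hb hd, mul_mul_mul_comm a b c d⟩
  inv_mem' := by
    rintro x ⟨a, ha, b, hb, rfl⟩
    exact ⟨a⁻¹, A.inv_mem ha, b⁻¹, B.inv_mem hb, mul_inv a b⟩

/-- The subgroup `𝕋 × {1} × 𝕋` of `𝕋³`. -/
noncomputable def KOne : Subgroup (Circle × Circle × Circle) :=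
  (⊤ : Subgroup Circle).prod ((⊥ : Subgroup Circle).prod (⊤ : Subgroup Circle))

/-- The subgroup `{1} × 𝕋 × 𝕋` of `𝕋³`. -/
noncomputable def KTwo : Subgroup (Circle × Circle × Circle) :=
  (⊥ : Subgroup Circle).prod ((⊤ : Subgroup Circle).prod (⊤ : Subgroup Circle))

/-!
If `δ` carries `ΛK₁` onto `ΛK₂`, it maps the circle `{(t, 1, t)} ⊆ K₁` into `ΛK₂`, whose first
coordinates form the countable group `⟨α⟩`; by connectedness the first coordinate of `δ (t, 1, t)`
is trivial. Continuous endomorphisms of `𝕋` are `t ↦ tⁿ` (lift through the covering `ℝ → 𝕋`), so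
`δ (α, 1, α) = (1, αᵐ, αⁿ)`. This lies in `δ(Λ) = Λ`, and rational independence forces
`m = n = 0`, contradicting the injectivity of `δ`.
-/

open Real

theorem Circle.exists_eq_zpow_of_continuous (f : Circle →* Circle) (hf : Continuous f) :
    ∃ n : ℤ, ∀ z, f z = z ^ n := by
  let g : C(ℝ, Circle) := ⟨f ∘ Circle.exp, hf.comp Circle.exp.continuous⟩
  obtain ⟨L, ⟨hL0, hL⟩, -⟩ :=
    Circle.isCoveringMap_exp.existsUnique_continuousMap_lifts g 0 0 (by simp [g])
  have hL_apply (x : ℝ) : Circle.exp (L x) = f (Circle.exp x) := congrFun hL x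
  -- `t ↦ L (t + y)` and `t ↦ L t + L y` lift the same map and agree at `0`.
  have hL_add (x y : ℝ) : L (x + y) = L x + L y := by
    let gy : C(ℝ, Circle) := g.comp ⟨(· + y), by fun_prop⟩
    have huniq := (Circle.isCoveringMap_exp.existsUnique_continuousMap_lifts gy 0 (L y)
      (by simp [gy, g, hL_apply])).unique
      (y₁ := L.comp ⟨(· + y), by fun_prop⟩) (y₂ := ⟨fun t => L t + L y, by fun_prop⟩)
    refine congrFun (congrArg DFunLike.coe (huniq ⟨by simp, ?_⟩ ⟨by simp [hL0], ?_⟩)) x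
    · ext1 t; simp [gy, g, hL_apply]
    · ext1 t; simp [gy, g, hL_apply, Circle.exp_add]
  let A : ℝ →+ ℝ := ⟨⟨L, hL0⟩, hL_add⟩
  have hL_mul (x : ℝ) : L x = x * L 1 := by
    simpa [A] using map_real_smul A L.continuous x 1
  obtain ⟨n, hn⟩ : ∃ n : ℤ, L 1 * (2 * π) = n * (2 * π) := by
    rw [← Circle.exp_eq_one, mul_comm, ← hL_mul, hL_apply, Circle.exp_two_pi, map_one]
  have hLn : L 1 = n := mul_right_cancel₀ (by positivity) hn
  refine ⟨n, fun z => ?_⟩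
  obtain ⟨x, rfl⟩ := Circle.exp_surjective z
  rw [← hL_apply, hL_mul, hLn, mul_comm, Circle.exp_intCast_mul]

theorem MonoidHom.eq_one_of_countable_range {G H : Type*} [Monoid G] [TopologicalSpace G]
    [PreconnectedSpace G] [Monoid H] [MetricSpace H] (f : G →* H) (hf : Continuous f)
    (hc : (Set.range f).Countable) (g : G) : f g = 1 :=
  hc.isTotallyDisconnected _ subset_rfl (isPreconnected_range hf) ⟨g, rfl⟩ ⟨1, map_one f⟩

theorem Subgroup.mem_closure_triple {C : Type*} [CommGroup C] {x y z w : C} :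
    w ∈ closure ({x, y, z} : Set C) ↔ ∃ a b c : ℤ, x ^ a * y ^ b * z ^ c = w := by
  rw [← Set.singleton_union, Subgroup.closure_union, mem_sup]
  simp [mem_closure_singleton, mem_closure_pair, mul_assoc]

theorem prodSubgroup_eq_sup {K : Type*} [CommGroup K] (A B : Subgroup K) :
    prodSubgroup A B = A ⊔ B := by
  ext x
  rw [Subgroup.mem_sup]
  show (∃ a ∈ A, ∃ b ∈ B, x = a * b) ↔ _
  simp only [eq_comm (a := x)]

section LambdaSubgroup

variable {α β γ : Circle}

noncomputable abbrev lambdaSubgroup (α β γ : Circle) : Subgroup (Circle × Circle × Circle) :=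
  Subgroup.closure {(α, 1, α), (1, α, β), (1, 1, γ)}

theorem lambdaSubgroup_le_prod_zpowers :
    lambdaSubgroup α β γ ≤ (Subgroup.zpowers α).prod ⊤ := by
  rw [Subgroup.closure_le]
  rintro _ (rfl | rfl | rfl) <;> simp [Subgroup.mem_prod, Subgroup.mem_zpowers]

theorem prodSubgroup_lambdaSubgroup_KTwo_le_prod_zpowers :
    prodSubgroup (lambdaSubgroup α β γ) KTwo ≤ (Subgroup.zpowers α).prod ⊤ := by
  rw [prodSubgroup_eq_sup]
  exact sup_le lambdaSubgroup_le_prod_zpowers (Subgroup.prod_mono bot_le le_top)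

theorem eq_zero_of_mk_mem_lambdaSubgroup
    (hindep : ∀ a b c : ℤ, α ^ a * β ^ b * γ ^ c = 1 → a = 0 ∧ b = 0 ∧ c = 0) {m n : ℤ}
    (h : ((1, α ^ m, α ^ n) : Circle × Circle × Circle) ∈ lambdaSubgroup α β γ) :
    m = 0 ∧ n = 0 := by
  obtain ⟨a, b, c, h⟩ := Subgroup.mem_closure_triple.mp h
  simp only [Prod.pow_mk, Prod.mk_mul_mk, one_zpow, mul_one, one_mul, Prod.mk.injEq] at h
  obtain ⟨h₁, h₂, h₃⟩ := h
  have hα (k : ℤ) (hk : α ^ k = 1) : k = 0 := (hindep k 0 0 (by simpa using hk)).1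
  obtain rfl := hα a h₁
  rw [zpow_zero, one_mul] at h₃
  obtain ⟨hn, rfl, -⟩ := hindep (-n) b c (by rw [mul_assoc, h₃, zpow_neg, inv_mul_cancel])
  exact ⟨hα m (by rw [← h₂, zpow_zero]), neg_eq_zero.mp hn⟩

end LambdaSubgroup

/-- Let `α, β, γ ∈ 𝕋` be rationally independent and `Λ ≤ 𝕋³` the subgroup
generated by `(α,1,α)`, `(1,α,β)`, `(1,1,γ)`.  Then there exists no topological group
automorphism `δ` of `𝕋³` satisfying both `δ(Λ) = Λ` and `δ(ΛK₁) = ΛK₂`. -/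
theorem no_automorphism_preserving_lambda_swapping
    (α β γ : Circle)
    (hindep : ∀ a b c : ℤ, α ^ a * β ^ b * γ ^ c = 1 → a = 0 ∧ b = 0 ∧ c = 0)
    (Λ : Subgroup (Circle × Circle × Circle))
    (hΛ : Λ = Subgroup.closure {(α, 1, α), (1, α, β), (1, 1, γ)}) :
    ¬ ∃ δ : (Circle × Circle × Circle) ≃* (Circle × Circle × Circle),
      Continuous δ ∧ Continuous δ.symm ∧
      Subgroup.map δ.toMonoidHom Λ = Λ ∧
      Subgroup.map δ.toMonoidHom (prodSubgroup Λ KOne) = prodSubgroup Λ KTwo := by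
  obtain rfl : Λ = lambdaSubgroup α β γ := hΛ
  rintro ⟨δ, hδ, -, hδΛ, hδK⟩
  let u : Circle →* Circle × Circle × Circle :=
    δ.toMonoidHom.comp ((MonoidHom.id Circle).prod (MonoidHom.prod 1 (MonoidHom.id Circle)))
  have hu : Continuous u := hδ.comp (continuous_id.prodMk (continuous_const.prodMk continuous_id))
  have hu_fst : ∀ t, (u t).1 = 1 := by
    refine (MonoidHom.fst _ _ |>.comp u).eq_one_of_countable_range (continuous_fst.comp hu) ?_
    refine (Set.countable_range (α ^ · : ℤ → Circle)).mono ?_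
    rintro _ ⟨t, rfl⟩
    have hK : u t ∈ prodSubgroup (lambdaSubgroup α β γ) KTwo :=
      hδK ▸ Subgroup.mem_map_of_mem _
        ⟨1, one_mem _, (t, 1, t), by simp [KOne, Subgroup.mem_prod], (one_mul _).symm⟩
    exact Subgroup.mem_zpowers_iff.mp (prodSubgroup_lambdaSubgroup_KTwo_le_prod_zpowers hK).1
  obtain ⟨m, hm⟩ := Circle.exists_eq_zpow_of_continuous
    ((MonoidHom.fst _ _).comp ((MonoidHom.snd _ _).comp u)) (continuous_snd.fst.comp hu)
  obtain ⟨n, hn⟩ := Circle.exists_eq_zpow_of_continuous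
    ((MonoidHom.snd _ _).comp ((MonoidHom.snd _ _).comp u)) (continuous_snd.snd.comp hu)
  have huα : u α = (1, α ^ m, α ^ n) := Prod.ext (hu_fst α) (Prod.ext (hm α) (hn α))
  have huα_mem : u α ∈ lambdaSubgroup α β γ :=
    hδΛ ▸ Subgroup.mem_map_of_mem _ (Subgroup.subset_closure (by simp))
  obtain ⟨rfl, rfl⟩ := eq_zero_of_mk_mem_lambdaSubgroup hindep (huα ▸ huα_mem)
  rw [zpow_zero] at huα
  have hα : ((α, 1, α) : Circle × Circle × Circle) = 1 := (map_eq_one_iff δ δ.injective).mp huα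
  exact one_ne_zero (hindep 1 0 0 (by simpa using congrArg Prod.fst hα)).1
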